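/- arXiv:2502.10415 — 5 statements merged into one kernel-verified Lean document; each statement's English description precedes it below -/
import Mathlib

section
/- Fix constants k and T with 0 < k < 1 and T > 0, and let α_k(t) = 1 + kt. Let v : ℝ² → ℝ be twice continuously differentiable on Q = (0,1) × (0,T) and satisfy on Q the equation ∂²v/∂t² − ((1 − k²y²)/α_k(t)²)·∂²v/∂y² + (2k²y/α_k(t)²)·∂v/∂y − (2ky/α_k(t))·∂²v/∂y∂t = 0. Define u(x,t) := v(x/α_k(t), t). Then u is twice continuously differentiable on the non-cylindrical domain Q̂ = {(x,t) : 0 < x < α_k(t), 0 < t < T} and satisfies the wave equation ∂²u/∂t² − ∂²u/∂x² = 0 on Q̂. -/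
/-!
Write `u = v ∘ φ` with `φ (x, t) = (x b(t), t)` and `b(t) = (1 + k t)⁻¹`, so that `φ` maps `Q̂` into
`Q`. The second-order chain rule `D²(v ∘ φ) = D²v (Dφ, Dφ) + Dv (D²φ)`, together with
`Dφ (1, 0) = (b, 0)`, `Dφ (0, 1) = (x b', 1)` and `D²φ ((0, 1), (0, 1)) = (x b'', 0)`, turns
`u_tt - u_xx` into `v_tt + ((x b')² - b²) v_yy + 2 x b' v_yt + x b'' v_y` (using `v_yt = v_ty`),
which for this `b` is the left-hand side of the transformed equation.
-/

open ContinuousLinearMap Filter Topology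

section SecondOrderChainRule

variable {𝕜 E F G : Type*} [NontriviallyNormedField 𝕜]
  [NormedAddCommGroup E] [NormedSpace 𝕜 E] [NormedAddCommGroup F] [NormedSpace 𝕜 F]
  [NormedAddCommGroup G] [NormedSpace 𝕜 G]

theorem fderiv_fderiv_apply_eq {f : E → F} {x : E}
    (hf : DifferentiableAt 𝕜 (fderiv 𝕜 f) x) (e e' : E) :
    fderiv 𝕜 (fun y => fderiv 𝕜 f y e') x e = fderiv 𝕜 (fderiv 𝕜 f) x e e' := by
  rw [fderiv_clm_apply hf (differentiableAt_const e')]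
  simp

theorem fderiv_fderiv_comp_apply {g : F → G} {f : E → F} {x : E}
    (hg : ContDiffAt 𝕜 2 g (f x)) (hf : ContDiffAt 𝕜 2 f x) (e e' : E) :
    fderiv 𝕜 (fderiv 𝕜 (g ∘ f)) x e e' =
      fderiv 𝕜 (fderiv 𝕜 g) (f x) (fderiv 𝕜 f x e) (fderiv 𝕜 f x e') +
        fderiv 𝕜 g (f x) (fderiv 𝕜 (fderiv 𝕜 f) x e e') := by
  have hfderiv_comp :
      fderiv 𝕜 (g ∘ f) =ᶠ[𝓝 x] fun y => (fderiv 𝕜 g (f y)).comp (fderiv 𝕜 f y) := by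
    filter_upwards [hf.eventually (by simp), hf.continuousAt.eventually (hg.eventually (by simp))]
      with y hfy hgy
    exact fderiv_comp y (hgy.differentiableAt two_ne_zero) (hfy.differentiableAt two_ne_zero)
  have hDg : HasFDerivAt (fun y => fderiv 𝕜 g (f y))
      ((fderiv 𝕜 (fderiv 𝕜 g) (f x)).comp (fderiv 𝕜 f x)) x :=
    ((hg.fderiv_right le_rfl).differentiableAt one_ne_zero).hasFDerivAt.comp x
      (hf.differentiableAt two_ne_zero).hasFDerivAt
  have hDf : HasFDerivAt (fderiv 𝕜 f) (fderiv 𝕜 (fderiv 𝕜 f) x) x :=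
    ((hf.fderiv_right le_rfl).differentiableAt one_ne_zero).hasFDerivAt
  rw [hfderiv_comp.fderiv_eq, (hDg.clm_comp hDf).fderiv]
  simp [add_comm]

end SecondOrderChainRule

def rescale (b : ℝ → ℝ) (q : ℝ × ℝ) : ℝ × ℝ := (q.1 * b q.2, q.2)

noncomputable def waveOperator (w : ℝ × ℝ → ℝ) (p : ℝ × ℝ) : ℝ :=
  fderiv ℝ (fderiv ℝ w) p (0, 1) (0, 1) - fderiv ℝ (fderiv ℝ w) p (1, 0) (1, 0)

section Rescale

variable {b b' : ℝ → ℝ} {β b'' : ℝ} {p q : ℝ × ℝ}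

theorem fderiv_rescale_apply (hb : HasDerivAt b β q.2) (e : ℝ × ℝ) :
    fderiv ℝ (rescale b) q e = (e.1 * b q.2 + q.1 * β * e.2, e.2) := by
  have h : HasFDerivAt (rescale b) _ q :=
    (hasFDerivAt_fst.mul (hb.comp_hasFDerivAt q hasFDerivAt_snd)).prodMk
      (hasFDerivAt_snd (𝕜 := ℝ))
  rw [h.fderiv]
  simp only [Function.comp_apply, ContinuousLinearMap.prod_apply, add_apply, smul_apply, coe_snd',
    coe_fst', smul_eq_mul, Prod.mk.injEq, and_true]
  ring

theorem contDiffAt_rescale {n : WithTop ℕ∞} (hb : ContDiffAt ℝ n b q.2) :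
    ContDiffAt ℝ n (rescale b) q :=
  (contDiffAt_fst.mul (hb.comp q contDiffAt_snd)).prodMk contDiffAt_snd

theorem fderiv_fderiv_rescale_apply (hb : ContDiffAt ℝ 2 b p.2)
    (hb' : ∀ᶠ s in 𝓝 p.2, HasDerivAt b (b' s) s) (hb'' : HasDerivAt b' b'' p.2)
    (e e' : ℝ × ℝ) :
    fderiv ℝ (fderiv ℝ (rescale b)) p e e' =
      (b' p.2 * (e.1 * e'.2 + e.2 * e'.1) + p.1 * b'' * e.2 * e'.2, 0) := by
  have hD : (fun q => fderiv ℝ (rescale b) q e') =ᶠ[𝓝 p]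
      fun q => (e'.1 * b q.2 + q.1 * b' q.2 * e'.2, e'.2) := by
    filter_upwards [continuousAt_snd.eventually hb'] with q hq
    exact fderiv_rescale_apply hq e'
  have hbp : HasFDerivAt (fun q : ℝ × ℝ => b q.2) (b' p.2 • snd ℝ ℝ ℝ) p :=
    hb'.self_of_nhds.comp_hasFDerivAt p hasFDerivAt_snd
  have hb'p : HasFDerivAt (fun q : ℝ × ℝ => b' q.2) (b'' • snd ℝ ℝ ℝ) p :=
    hb''.comp_hasFDerivAt p hasFDerivAt_snd
  have h : HasFDerivAt (fun q : ℝ × ℝ => (e'.1 * b q.2 + q.1 * b' q.2 * e'.2, e'.2)) _ p :=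
    ((hbp.const_mul e'.1).add ((hasFDerivAt_fst.mul hb'p).mul_const e'.2)).prodMk
      (hasFDerivAt_const e'.2 p)
  rw [← fderiv_fderiv_apply_eq, hD.fderiv_eq, h.fderiv]
  · simp only [smul_add, ContinuousLinearMap.prod_apply, add_apply, smul_apply, coe_snd', coe_fst',
      smul_eq_mul, zero_apply, Prod.mk.injEq, and_true]
    ring
  · exact ((contDiffAt_rescale hb).fderiv_right le_rfl).differentiableAt one_ne_zero

theorem waveOperator_comp_rescale {v : ℝ × ℝ → ℝ} (hv : ContDiffAt ℝ 2 v (rescale b p))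
    (hb : ContDiffAt ℝ 2 b p.2) (hb' : ∀ᶠ s in 𝓝 p.2, HasDerivAt b (b' s) s)
    (hb'' : HasDerivAt b' b'' p.2) :
    waveOperator (v ∘ rescale b) p =
      fderiv ℝ (fderiv ℝ v) (rescale b p) (0, 1) (0, 1)
        + ((p.1 * b' p.2) ^ 2 - b p.2 ^ 2) * fderiv ℝ (fderiv ℝ v) (rescale b p) (1, 0) (1, 0)
        + 2 * p.1 * b' p.2 * fderiv ℝ (fderiv ℝ v) (rescale b p) (0, 1) (1, 0)
        + p.1 * b'' * fderiv ℝ v (rescale b p) (1, 0) := by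
  have hsymm :=
    (hv.isSymmSndFDerivAt (by simp [minSmoothness_of_isRCLikeNormedField])) (1, 0) (0, 1)
  simp only [waveOperator, fderiv_fderiv_comp_apply hv (contDiffAt_rescale hb),
    fderiv_rescale_apply hb'.self_of_nhds, fderiv_fderiv_rescale_apply hb hb' hb'']
  simp only [one_mul, zero_mul, mul_one, mul_zero, add_zero, zero_add]
  rw [show ((b p.2, 0) : ℝ × ℝ) = b p.2 • (1, 0) by simp,
    show ((p.1 * b'', 0) : ℝ × ℝ) = (p.1 * b'') • (1, 0) by simp,
    show ((p.1 * b' p.2, 1) : ℝ × ℝ) = (p.1 * b' p.2) • (1, 0) + (0, 1) by simp]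
  simp only [map_add, map_smul, add_apply, smul_apply, smul_eq_mul, Prod.mk_zero_zero, map_zero,
    hsymm]
  ring

end Rescale

section MovingBoundary

variable {k t : ℝ}

theorem contDiffAt_inv_one_add_mul {n : WithTop ℕ∞} (h : 1 + k * t ≠ 0) :
    ContDiffAt ℝ n (fun s => (1 + k * s)⁻¹) t :=
  (contDiffAt_const.add (contDiffAt_const.mul contDiffAt_id)).inv h

theorem hasDerivAt_inv_one_add_mul (h : 1 + k * t ≠ 0) :
    HasDerivAt (fun s => (1 + k * s)⁻¹) (-k / (1 + k * t) ^ 2) t := by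
  simpa using (((hasDerivAt_id t).const_mul k).const_add 1).fun_inv h

theorem hasDerivAt_neg_div_one_add_mul_sq (h : 1 + k * t ≠ 0) :
    HasDerivAt (fun s => -k / (1 + k * s) ^ 2) (2 * k ^ 2 / (1 + k * t) ^ 3) t := by
  have h' := (hasDerivAt_const t (-k)).fun_div
    ((((hasDerivAt_id t).const_mul k).const_add 1).fun_pow 2) (pow_ne_zero 2 h)
  refine h'.congr_deriv ?_
  simp only [id, Nat.cast_ofNat]
  field_simp
  ring

theorem waveOperator_comp_rescale_inv_one_add_mul {v : ℝ × ℝ → ℝ} {p z : ℝ × ℝ}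
    (hp : 1 + k * p.2 ≠ 0) (hz : rescale (fun s => (1 + k * s)⁻¹) p = z)
    (hv : ContDiffAt ℝ 2 v z) :
    waveOperator (v ∘ rescale fun s => (1 + k * s)⁻¹) p =
      fderiv ℝ (fderiv ℝ v) z (0, 1) (0, 1)
        - ((1 - k ^ 2 * z.1 ^ 2) / (1 + k * z.2) ^ 2) * fderiv ℝ (fderiv ℝ v) z (1, 0) (1, 0)
        + (2 * k ^ 2 * z.1 / (1 + k * z.2) ^ 2) * fderiv ℝ v z (1, 0)
        - (2 * k * z.1 / (1 + k * z.2)) * fderiv ℝ (fderiv ℝ v) z (0, 1) (1, 0) := by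
  subst hz
  have hb' : ∀ᶠ s in 𝓝 p.2, HasDerivAt (fun s => (1 + k * s)⁻¹) (-k / (1 + k * s) ^ 2) s :=
    ((continuousAt_const.add (continuousAt_const.mul continuousAt_id)).eventually_ne hp).mono
      fun s hs => hasDerivAt_inv_one_add_mul hs
  rw [waveOperator_comp_rescale hv (contDiffAt_inv_one_add_mul hp) hb'
    (hasDerivAt_neg_div_one_add_mul_sq hp)]
  simp only [rescale]
  field_simp
  ring

theorem mapsTo_rescale_inv_one_add_mul (k T : ℝ) :
    Set.MapsTo (rescale fun s => (1 + k * s)⁻¹)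
      {p : ℝ × ℝ | 0 < p.1 ∧ p.1 < 1 + k * p.2 ∧ 0 < p.2 ∧ p.2 < T}
      (Set.Ioo 0 1 ×ˢ Set.Ioo 0 T) := fun q ⟨hx, hxa, ht, htT⟩ =>
  have ha : 0 < 1 + k * q.2 := hx.trans hxa
  ⟨⟨mul_pos hx (inv_pos.2 ha), by simpa [rescale, ← div_eq_mul_inv] using (div_lt_one ha).2 hxa⟩,
    ht, htT⟩

end MovingBoundary

theorem stmt_2_general (k T : ℝ)
    (α : ℝ → ℝ) (hα : ∀ t, α t = 1 + k * t)
    (Qhat Q : Set (ℝ × ℝ))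
    (hQhat : Qhat = {p : ℝ × ℝ | 0 < p.1 ∧ p.1 < α p.2 ∧ 0 < p.2 ∧ p.2 < T})
    (hQ : Q = Set.Ioo (0 : ℝ) 1 ×ˢ Set.Ioo (0 : ℝ) T)
    (v : ℝ × ℝ → ℝ)
    (hv : ContDiffOn ℝ 2 v Q)
    (heq : ∀ p ∈ Q,
      fderiv ℝ (fun q => fderiv ℝ v q (0, 1)) p (0, 1)
        - ((1 - k ^ 2 * p.1 ^ 2) / (α p.2) ^ 2) *
            fderiv ℝ (fun q => fderiv ℝ v q (1, 0)) p (1, 0)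
        + (2 * k ^ 2 * p.1 / (α p.2) ^ 2) * fderiv ℝ v p (1, 0)
        - (2 * k * p.1 / α p.2) *
            fderiv ℝ (fun q => fderiv ℝ v q (1, 0)) p (0, 1) = 0)
    (u : ℝ × ℝ → ℝ)
    (hu : ∀ p : ℝ × ℝ, u p = v (p.1 / α p.2, p.2)) :
    ContDiffOn ℝ 2 u Qhat ∧
    ∀ p ∈ Qhat,
      fderiv ℝ (fun q => fderiv ℝ u q (0, 1)) p (0, 1)
        - fderiv ℝ (fun q => fderiv ℝ u q (1, 0)) p (1, 0) = 0 := by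
  obtain rfl : α = fun t => 1 + k * t := funext hα
  subst hQhat hQ
  have hu_eq : u = v ∘ rescale fun t => (1 + k * t)⁻¹ :=
    funext fun q => by simp [hu, rescale, div_eq_mul_inv]
  have hmaps := mapsTo_rescale_inv_one_add_mul k T
  have hrescale : ∀ q ∈ {p : ℝ × ℝ | 0 < p.1 ∧ p.1 < 1 + k * p.2 ∧ 0 < p.2 ∧ p.2 < T},
      ContDiffAt ℝ 2 (rescale fun t => (1 + k * t)⁻¹) q := fun q hq =>
    contDiffAt_rescale (contDiffAt_inv_one_add_mul (hq.1.trans hq.2.1).ne')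
  refine ⟨hu_eq ▸ hv.comp (fun q hq => (hrescale q hq).contDiffWithinAt) hmaps, fun p hp => ?_⟩
  have hvz : ContDiffAt ℝ 2 v _ := hv.contDiffAt ((isOpen_Ioo.prod isOpen_Ioo).mem_nhds (hmaps hp))
  have hu2 : ContDiffAt ℝ 2 u p := hu_eq ▸ hvz.comp p (hrescale p hp)
  have hDu := (hu2.fderiv_right le_rfl).differentiableAt one_ne_zero
  have hveq := heq _ (hmaps hp)
  simp only [fderiv_fderiv_apply_eq ((hvz.fderiv_right le_rfl).differentiableAt one_ne_zero)]
    at hveq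
  rw [fderiv_fderiv_apply_eq hDu, fderiv_fderiv_apply_eq hDu]
  change waveOperator u p = 0
  rw [hu_eq, waveOperator_comp_rescale_inv_one_add_mul (hp.1.trans hp.2.1).ne' rfl hvz]
  exact hveq

/-- If v is C² on the cylinder Q = (0,1) × (0,T) and solves the transformed
equation v_tt − ((1 − k²y²)/α_k(t)²) v_yy + (2k²y/α_k(t)²) v_y
− (2ky/α_k(t)) v_yt = 0, then u(x,t) := v(x/α_k(t), t) is C² on the
non-cylindrical domain Q̂ and solves the wave equation u_tt − u_xx = 0 there. -/
theorem stmt_2 (k T : ℝ) (hk0 : 0 < k) (hk1 : k < 1) (hT : 0 < T)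
    (α : ℝ → ℝ) (hα : ∀ t, α t = 1 + k * t)
    (Qhat Q : Set (ℝ × ℝ))
    (hQhat : Qhat = {p : ℝ × ℝ | 0 < p.1 ∧ p.1 < α p.2 ∧ 0 < p.2 ∧ p.2 < T})
    (hQ : Q = Set.Ioo (0 : ℝ) 1 ×ˢ Set.Ioo (0 : ℝ) T)
    (v : ℝ × ℝ → ℝ)
    (hv : ContDiffOn ℝ 2 v Q)
    (heq : ∀ p ∈ Q,
      fderiv ℝ (fun q => fderiv ℝ v q (0, 1)) p (0, 1)
        - ((1 - k ^ 2 * p.1 ^ 2) / (α p.2) ^ 2) *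
            fderiv ℝ (fun q => fderiv ℝ v q (1, 0)) p (1, 0)
        + (2 * k ^ 2 * p.1 / (α p.2) ^ 2) * fderiv ℝ v p (1, 0)
        - (2 * k * p.1 / α p.2) *
            fderiv ℝ (fun q => fderiv ℝ v q (1, 0)) p (0, 1) = 0)
    (u : ℝ × ℝ → ℝ)
    (hu : ∀ p : ℝ × ℝ, u p = v (p.1 / α p.2, p.2)) :
    ContDiffOn ℝ 2 u Qhat ∧
    ∀ p ∈ Qhat,
      fderiv ℝ (fun q => fderiv ℝ u q (0, 1)) p (0, 1)
        - fderiv ℝ (fun q => fderiv ℝ u q (1, 0)) p (1, 0) = 0 :=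
  stmt_2_general k T α hα Qhat Q hQhat hQ v hv heq u hu
end

section
/- Let H₁, H₂ and K be real Hilbert spaces, S : H₂ → K and T : H₁ → K continuous linear maps, h ∈ K, and σ > 0. For each w₁ ∈ H₁ let F(w₁) ∈ H₂ denote the unique minimizer over w₂ ∈ H₂ of ½‖S w₂ + T w₁ + h‖²_K + (σ/2)‖w₂‖²_{H₂}. Then F(w₁) = −(σ·id + S*∘S)⁻¹(S*(T w₁ + h)); in particular F is an affine map, and it is Lipschitz with ‖F(w₁) − F(w₁')‖ ≤ (‖S‖·‖T‖/σ)·‖w₁ − w₁'‖ for all w₁, w₁' ∈ H₁. -/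
/-!
At the minimiser the Fréchet derivative of the quadratic cost vanishes, which is the normal
equation `(σ + S*S) F(w₁) = -S*(T w₁ + h)`. Since `⟪(σ + S*S) z, z⟫ = σ‖z‖² + ‖S z‖²`, the operator
`σ + S*S` satisfies `σ‖z‖ ≤ ‖(σ + S*S) z‖`: it is injective, which makes `F` affine, and together
with `‖S*‖ = ‖S‖` this bound gives the Lipschitz constant `‖S‖‖T‖/σ`.
-/

namespace ContinuousLinearMap

variable {H₂ K : Type*}
  [NormedAddCommGroup H₂] [InnerProductSpace ℝ H₂] [CompleteSpace H₂]
  [NormedAddCommGroup K] [InnerProductSpace ℝ K] [CompleteSpace K]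

theorem smul_id_add_adjoint_comp_apply_eq_neg_adjoint_of_isMinOn {S : H₂ →L[ℝ] K} {b : K}
    {σ : ℝ} {u : H₂}
    (hu : IsMinOn (fun v => (1 / 2) * ‖S v + b‖ ^ 2 + (σ / 2) * ‖v‖ ^ 2) Set.univ u) :
    (σ • ContinuousLinearMap.id ℝ H₂ + (adjoint S).comp S) u = -adjoint S b := by
  set g := σ • u + adjoint S (S u + b)
  have hderiv : HasFDerivAt (fun v => (1 / 2) * ‖S v + b‖ ^ 2 + (σ / 2) * ‖v‖ ^ 2)
      (innerSL ℝ g) u := by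
    refine ((((S.hasFDerivAt.add_const b).norm_sq).const_mul (1 / 2)).add
      ((hasFDerivAt_id u).norm_sq.const_mul (σ / 2))).congr_fderiv ?_
    ext v
    simp [g, adjoint_inner_left]
    ring
  have hg : innerSL ℝ g = 0 := (hu.isLocalMin Filter.univ_mem).hasFDerivAt_eq_zero hderiv
  have hg_zero : g = 0 := inner_self_eq_zero.mp congr($hg g)
  simp only [add_apply, smul_apply, id_apply, comp_apply]
  rw [eq_neg_iff_add_eq_zero, add_assoc, ← map_add]
  exact hg_zero

theorem mul_norm_le_norm_smul_id_add_adjoint_comp_apply (S : H₂ →L[ℝ] K) (σ : ℝ) (z : H₂) :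
    σ * ‖z‖ ≤ ‖(σ • ContinuousLinearMap.id ℝ H₂ + (adjoint S).comp S) z‖ := by
  rcases (norm_nonneg z).eq_or_lt with hz | hz
  · simp [← hz]
  refine le_of_mul_le_mul_right ?_ hz
  calc σ * ‖z‖ * ‖z‖ ≤ σ * ‖z‖ ^ 2 + ‖S z‖ ^ 2 := by nlinarith [sq_nonneg ‖S z‖]
    _ = inner ℝ ((σ • ContinuousLinearMap.id ℝ H₂ + (adjoint S).comp S) z) z := by
      simp [inner_add_left, real_inner_smul_left, adjoint_inner_left]
    _ ≤ _ := real_inner_le_norm _ _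

end ContinuousLinearMap

open ContinuousLinearMap

theorem stmt_9_general {H₁ H₂ K : Type*}
    [NormedAddCommGroup H₁] [InnerProductSpace ℝ H₁]
    [NormedAddCommGroup H₂] [InnerProductSpace ℝ H₂] [CompleteSpace H₂]
    [NormedAddCommGroup K] [InnerProductSpace ℝ K] [CompleteSpace K]
    (S : H₂ →L[ℝ] K) (T : H₁ →L[ℝ] K) (h : K) (σ : ℝ) (hσ : 0 < σ)
    (J₂ : H₁ → H₂ → ℝ)
    (hJ₂ : ∀ w₁ w₂, J₂ w₁ w₂
      = (1 / 2) * ‖S w₂ + T w₁ + h‖ ^ 2 + (σ / 2) * ‖w₂‖ ^ 2)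
    (F : H₁ → H₂)
    (hF : ∀ w₁, ∀ w2h : H₂, J₂ w₁ (F w₁) ≤ J₂ w₁ w2h) :
    (∀ e : H₂ ≃L[ℝ] H₂, (e : H₂ →L[ℝ] H₂)
        = σ • ContinuousLinearMap.id ℝ H₂ + (ContinuousLinearMap.adjoint S).comp S →
      ∀ w₁, F w₁ = -e.symm (ContinuousLinearMap.adjoint S (T w₁ + h))) ∧
    (∀ w₁ w₁' : H₁, ∀ θ : ℝ,
      F (θ • w₁ + (1 - θ) • w₁') = θ • F w₁ + (1 - θ) • F w₁') ∧
    (∀ w₁ w₁' : H₁, ‖F w₁ - F w₁'‖ ≤ (‖S‖ * ‖T‖ / σ) * ‖w₁ - w₁'‖) := by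
  set A := σ • ContinuousLinearMap.id ℝ H₂ + (adjoint S).comp S
  have hAF : ∀ w₁, A (F w₁) = -adjoint S (T w₁ + h) := fun w₁ =>
    smul_id_add_adjoint_comp_apply_eq_neg_adjoint_of_isMinOn <| isMinOn_univ_iff.mpr fun v => by
      simpa only [hJ₂, add_assoc] using hF w₁ v
  have hA : ∀ z, σ * ‖z‖ ≤ ‖A z‖ := mul_norm_le_norm_smul_id_add_adjoint_comp_apply S σ
  have hA_inj : Function.Injective A := fun x y hxy => by
    have := hA (x - y)
    rw [map_sub, hxy, sub_self, norm_zero] at this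
    exact sub_eq_zero.mp (norm_le_zero_iff.mp (nonpos_of_mul_nonpos_right this hσ))
  refine ⟨fun e he w₁ => ?_, fun w₁ w₁' θ => hA_inj ?_, fun w₁ w₁' => ?_⟩
  · rw [← map_neg, e.eq_symm_apply, ← hAF, ← he, ContinuousLinearEquiv.coe_coe]
  · simp only [hAF, map_add, map_smul]
    module
  · have hAd : A (F w₁ - F w₁') = -adjoint S (T (w₁ - w₁')) := by
      simp only [map_sub, map_add, hAF]
      abel
    rw [div_mul_eq_mul_div, le_div_iff₀' hσ]
    calc σ * ‖F w₁ - F w₁'‖ ≤ ‖adjoint S (T (w₁ - w₁'))‖ := by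
          simpa only [hAd, norm_neg] using hA (F w₁ - F w₁')
      _ ≤ ‖S‖ * (‖T‖ * ‖w₁ - w₁'‖) := by
        grw [le_opNorm, adjoint.norm_map, le_opNorm]
      _ = ‖S‖ * ‖T‖ * ‖w₁ - w₁'‖ := by ring

/-- The follower map F assigning to each leader control w₁ the unique minimizer
of w₂ ↦ ½‖S w₂ + T w₁ + h‖² + (σ/2)‖w₂‖² satisfies
F(w₁) = −(σ·id + S*∘S)⁻¹(S*(T w₁ + h)); in particular F is affine and
Lipschitz with constant ‖S‖·‖T‖/σ. -/
theorem stmt_9 {H₁ H₂ K : Type*}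
    [NormedAddCommGroup H₁] [InnerProductSpace ℝ H₁] [CompleteSpace H₁]
    [NormedAddCommGroup H₂] [InnerProductSpace ℝ H₂] [CompleteSpace H₂]
    [NormedAddCommGroup K] [InnerProductSpace ℝ K] [CompleteSpace K]
    (S : H₂ →L[ℝ] K) (T : H₁ →L[ℝ] K) (h : K) (σ : ℝ) (hσ : 0 < σ)
    (J₂ : H₁ → H₂ → ℝ)
    (hJ₂ : ∀ w₁ w₂, J₂ w₁ w₂
      = (1 / 2) * ‖S w₂ + T w₁ + h‖ ^ 2 + (σ / 2) * ‖w₂‖ ^ 2)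
    (F : H₁ → H₂)
    (hF : ∀ w₁, ∀ w2h : H₂, J₂ w₁ (F w₁) ≤ J₂ w₁ w2h) :
    (∀ e : H₂ ≃L[ℝ] H₂, (e : H₂ →L[ℝ] H₂)
        = σ • ContinuousLinearMap.id ℝ H₂ + (ContinuousLinearMap.adjoint S).comp S →
      ∀ w₁, F w₁ = -e.symm (ContinuousLinearMap.adjoint S (T w₁ + h))) ∧
    (∀ w₁ w₁' : H₁, ∀ θ : ℝ,
      F (θ • w₁ + (1 - θ) • w₁') = θ • F w₁ + (1 - θ) • F w₁') ∧
    (∀ w₁ w₁' : H₁, ‖F w₁ - F w₁'‖ ≤ (‖S‖ * ‖T‖ / σ) * ‖w₁ - w₁'‖) :=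
  stmt_9_general S T h σ hσ J₂ hJ₂ F hF
end

section
/- Let H, K₁, K₂ be real Hilbert spaces and A : H → K₁ × K₂ a continuous linear map with dense range and adjoint A*. Let c₁ ∈ K₁, c₂ ∈ K₂ and ρ₁, ρ₂ > 0, and let C := {(a,b) : ‖a − c₁‖ ≤ ρ₁ and ‖b − c₂‖ ≤ ρ₂}. Then the primal value and the dual value coincide with opposite sign: inf {½‖w‖²_H : w ∈ H, A w ∈ C} = − inf {½‖A*(f⁰,f¹)‖²_H − ⟨f⁰, c₁⟩ − ⟨f¹, c₂⟩ + ρ₁‖f⁰‖ + ρ₂‖f¹‖ : (f⁰,f¹) ∈ K₁ × K₂}. -/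
/-
Weak duality is Cauchy–Schwarz followed by `ab ≤ a²/2 + b²/2`. For the reverse inequality the
constraint `B w ∈ C` (here `B w = (A₁ w, A₂ w)` and `C` is the product of the two balls) is
relaxed: for `t > 0` let `(x, y)` be the point of minimal norm of `{(x, y) : B x + t y ∈ C}` in
`H × K`. Its variational inequality says that `x = B*(y / t)` and that `B x + t y` maximises
`⟪-y, ·⟫` on `C`, so the dual functional at `f = y / t` is at most `-½‖x‖² - ‖y‖²`. Since
`B x` lies within `t ‖w₀‖` of `C` and `B w₀` is an interior point of `C` (by density of the
range), moving `x` towards `w₀` by a weight `O(t)` makes it feasible, so the primal value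
exceeds `½‖x‖²` by `O(t)`. Letting `t → 0` closes the duality gap.
-/

open scoped RealInnerProductSpace InnerProduct
open Metric

theorem nonpos_of_forall_pos_le_mul {a c : ℝ} (h : ∀ t > 0, a ≤ c * t) : a ≤ 0 := by
  have hlim : Filter.Tendsto (fun t => c * t) (nhdsWithin 0 (Set.Ioi 0)) (nhds 0) := by
    simpa using ((continuous_const_mul c).tendsto 0).mono_left nhdsWithin_le_nhds
  exact ge_of_tendsto hlim (eventually_nhdsWithin_of_forall h)

section MinimalNorm

variable {F : Type*} [NormedAddCommGroup F] [InnerProductSpace ℝ F]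

theorem exists_mem_forall_inner_sub_nonneg {E : Set F} (hne : E.Nonempty) (hc : IsComplete E)
    (hconv : Convex ℝ E) : ∃ p ∈ E, ∀ q ∈ E, 0 ≤ ⟪p, q - p⟫ := by
  obtain ⟨p, hp, hmin⟩ := exists_norm_eq_iInf_of_complete_convex hne hc hconv 0
  refine ⟨p, hp, fun q hq => ?_⟩
  have := (norm_eq_iInf_iff_real_inner_le_zero hconv hp).mp hmin q hq
  rwa [zero_sub, inner_neg_left, neg_nonpos] at this

theorem norm_le_of_inner_sub_nonneg {p q : F} (h : 0 ≤ ⟪p, q - p⟫) : ‖p‖ ≤ ‖q‖ := by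
  have hsq := norm_add_sq_real p (q - p)
  rw [add_sub_cancel] at hsq
  nlinarith [sq_nonneg ‖q - p‖, norm_nonneg p, norm_nonneg q]

theorem Convex.combo_mem_of_closedBall_subset {C : Set F} (hC : Convex ℝ C) {b k e : F}
    {δ : ℝ} (hδ : 0 < δ) (hball : closedBall b δ ⊆ C) (hk : k + e ∈ C) :
    (δ / (‖e‖ + δ)) • k + (‖e‖ / (‖e‖ + δ)) • b ∈ C := by
  rcases eq_or_ne e 0 with rfl | he
  · simpa [hδ.ne'] using hk
  have he' : 0 < ‖e‖ := norm_pos_iff.mpr he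
  have hb : b - (δ / ‖e‖) • e ∈ C := hball <| by
    rw [mem_closedBall_iff_norm, sub_sub_cancel_left, norm_neg, norm_smul, Real.norm_of_nonneg
      (by positivity), div_mul_cancel₀ _ he'.ne']
  convert hC hk hb (show 0 ≤ δ / (‖e‖ + δ) by positivity)
    (show 0 ≤ ‖e‖ / (‖e‖ + δ) by positivity) (by field_simp; ring) using 1
  rw [smul_add, smul_sub, smul_smul]
  field_simp
  module

end MinimalNorm

section Duality

variable {H K : Type*} [NormedAddCommGroup H] [InnerProductSpace ℝ H]
  [NormedAddCommGroup K] [InnerProductSpace ℝ K] (B : H →L[ℝ] K) {C : Set K}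

/-- A minimal-norm point `(x, y)` of this set minimises `½‖x‖² + ½ t⁻² dist (B x, C)²`, a
quadratic penalisation of the constraint `B x ∈ C`. -/
def penaltySet (C : Set K) (t : ℝ) : Set (WithLp 2 (H × K)) := {p | B p.fst + t • p.snd ∈ C}

theorem isClosed_penaltySet (hC : IsClosed C) (t : ℝ) : IsClosed (penaltySet B C t) :=
  hC.preimage (by fun_prop)

theorem convex_penaltySet (hC : Convex ℝ C) (t : ℝ) : Convex ℝ (penaltySet B C t) :=
  hC.is_linear_preimage
    ⟨fun p q => by simp only [WithLp.add_fst, WithLp.add_snd, map_add, smul_add]; abel,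
      fun c p => by simp only [WithLp.smul_fst, WithLp.smul_snd, map_smul, smul_add, smul_comm t c]⟩

variable {B} {t : ℝ} {p : WithLp 2 (H × K)}

theorem inner_le_of_forall_inner_sub_nonneg (ht : 0 < t)
    (hmin : ∀ q ∈ penaltySet B C t, 0 ≤ ⟪p, q - p⟫) {k : K} (hk : k ∈ C) :
    ⟪p.snd, B p.fst + t • p.snd⟫ ≤ ⟪p.snd, k⟫ := by
  set d : WithLp 2 (H × K) := WithLp.toLp 2 (0, t⁻¹ • (k - (B p.fst + t • p.snd)))
  have hq : p + d ∈ penaltySet B C t := by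
    show _ ∈ C
    convert hk using 1
    simp only [d, WithLp.add_fst, WithLp.add_snd, WithLp.toLp_fst, WithLp.toLp_snd, map_add,
      map_zero, smul_add, smul_smul, mul_inv_cancel₀ ht.ne', one_smul]
    abel
  have hinner := hmin _ hq
  simp only [add_sub_cancel_left, d, WithLp.prod_inner_apply, WithLp.ofLp_fst, WithLp.ofLp_snd,
    inner_zero_right, zero_add, real_inner_smul_right, inner_sub_right] at hinner
  exact sub_nonneg.mp ((mul_nonneg_iff_of_pos_left (inv_pos.mpr ht)).mp hinner)

theorem exists_mem_preimage_half_sq_norm_le (hC : Convex ℝ C) {w₀ x : H} {u : K} {δ : ℝ}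
    (hδ : 0 < δ) (hball : closedBall (B w₀) δ ⊆ C) (hx : B x + u ∈ C) (hxw₀ : ‖x‖ ≤ ‖w₀‖) :
    ∃ w, B w ∈ C ∧ 1 / 2 * ‖w‖ ^ 2 ≤ 1 / 2 * ‖x‖ ^ 2 + 2 * ‖w₀‖ ^ 2 * (‖u‖ / δ) := by
  set l := ‖u‖ / (‖u‖ + δ)
  have hl₀ : 0 ≤ l := by positivity
  have hl₁ : l ≤ 1 := div_le_one_of_le₀ (by linarith) (by positivity)
  have hlδ : l ≤ ‖u‖ / δ :=
    div_le_div_of_nonneg_left (norm_nonneg u) hδ (by linarith [norm_nonneg u])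
  have hweight : δ / (‖u‖ + δ) = 1 - l := by
    rw [eq_sub_iff_add_eq, ← add_div, add_comm δ, div_self (by positivity)]
  refine ⟨(1 - l) • x + l • w₀, ?_, ?_⟩
  · simpa [hweight] using hC.combo_mem_of_closedBall_subset hδ hball hx
  have hnorm : ‖(1 - l) • x + l • w₀‖ ≤ ‖x‖ + l * ‖w₀‖ :=
    calc ‖(1 - l) • x + l • w₀‖ ≤ (1 - l) * ‖x‖ + l * ‖w₀‖ := by
          refine (norm_add_le _ _).trans_eq ?_
          rw [norm_smul, norm_smul, Real.norm_of_nonneg (by linarith), Real.norm_of_nonneg hl₀]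
      _ ≤ ‖x‖ + l * ‖w₀‖ := by nlinarith [norm_nonneg x]
  have hsq := pow_le_pow_left₀ (norm_nonneg _) hnorm 2
  have hcross : l * ‖w₀‖ * ‖x‖ ≤ l * ‖w₀‖ ^ 2 := by
    rw [sq, ← mul_assoc]
    exact mul_le_mul_of_nonneg_left hxw₀ (by positivity)
  have hl_sq : l ^ 2 * ‖w₀‖ ^ 2 ≤ l * ‖w₀‖ ^ 2 := by
    gcongr
    nlinarith
  nlinarith [mul_le_mul_of_nonneg_right hlδ (sq_nonneg ‖w₀‖), sq_nonneg ‖w₀‖]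

variable [CompleteSpace H] [CompleteSpace K]

theorem neg_half_sq_norm_le_dual {σ : K → ℝ} (hσ : ∀ g, ∀ k ∈ C, ⟪g, k⟫ ≤ σ g) {w : H}
    (hw : B w ∈ C) (f : K) : -(1 / 2 * ‖w‖ ^ 2) ≤ 1 / 2 * ‖(B†) f‖ ^ 2 + σ (-f) := by
  have hσf := hσ (-f) _ hw
  rw [inner_neg_left, ← ContinuousLinearMap.adjoint_inner_left] at hσf
  nlinarith [real_inner_le_norm ((B†) f) w, sq_nonneg (‖(B†) f‖ - ‖w‖)]

theorem fst_eq_adjoint_of_forall_inner_sub_nonneg (ht : t ≠ 0) (hp : p ∈ penaltySet B C t)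
    (hmin : ∀ q ∈ penaltySet B C t, 0 ≤ ⟪p, q - p⟫) : p.fst = (B†) (t⁻¹ • p.snd) := by
  have hdir : ∀ h : H, 0 ≤ ⟪p.fst, h⟫ + ⟪p.snd, -(t⁻¹ • B h)⟫ := by
    intro h
    set d : WithLp 2 (H × K) := WithLp.toLp 2 (h, -(t⁻¹ • B h))
    have hq : p + d ∈ penaltySet B C t := by
      show _ ∈ C
      convert (show B p.fst + t • p.snd ∈ C from hp) using 1
      simp only [d, WithLp.add_fst, WithLp.add_snd, WithLp.toLp_fst, WithLp.toLp_snd, map_add,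
        smul_add, smul_neg, smul_smul, mul_inv_cancel₀ ht, one_smul]
      abel
    simpa only [add_sub_cancel_left, d, WithLp.prod_inner_apply, WithLp.ofLp_toLp,
      WithLp.ofLp_fst, WithLp.ofLp_snd] using hmin _ hq
  refine ext_inner_right ℝ fun h => ?_
  have h₁ := hdir h
  have h₂ := hdir (-h)
  simp only [inner_neg_right, map_neg, smul_neg, neg_neg, real_inner_smul_right] at h₁ h₂
  rw [ContinuousLinearMap.adjoint_inner_left, real_inner_smul_left]
  linarith

theorem dual_le_of_forall_inner_sub_nonneg (ht : 0 < t) {σ : K → ℝ}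
    (hσ : ∀ g, IsLUB ((⟪g, ·⟫) '' C) (σ g)) (hp : p ∈ penaltySet B C t)
    (hmin : ∀ q ∈ penaltySet B C t, 0 ≤ ⟪p, q - p⟫) :
    1 / 2 * ‖(B†) (t⁻¹ • p.snd)‖ ^ 2 + σ (-(t⁻¹ • p.snd)) ≤
      -(1 / 2 * ‖p.fst‖ ^ 2) - ‖p.snd‖ ^ 2 := by
  have hfst := fst_eq_adjoint_of_forall_inner_sub_nonneg ht.ne' hp hmin
  have hσle : σ (-(t⁻¹ • p.snd)) ≤ ⟪-(t⁻¹ • p.snd), B p.fst + t • p.snd⟫ := by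
    refine (hσ _).2 ?_
    rintro _ ⟨k, hk, rfl⟩
    simp only [inner_neg_left, real_inner_smul_left, neg_le_neg_iff]
    exact mul_le_mul_of_nonneg_left (inner_le_of_forall_inner_sub_nonneg ht hmin hk)
      (inv_nonneg.mpr ht.le)
  have hval : ⟪-(t⁻¹ • p.snd), B p.fst + t • p.snd⟫ = -‖p.fst‖ ^ 2 - ‖p.snd‖ ^ 2 := by
    rw [inner_neg_left, inner_add_right, ← ContinuousLinearMap.adjoint_inner_left, ← hfst,
      real_inner_self_eq_norm_sq, real_inner_smul_left, real_inner_smul_right,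
      real_inner_self_eq_norm_sq, ← mul_assoc, inv_mul_cancel₀ ht.ne', one_mul]
    ring
  rw [← hfst]
  linarith

theorem exists_primal_dual_gap_le (hCc : IsClosed C) (hC : Convex ℝ C) {σ : K → ℝ}
    (hσ : ∀ g, IsLUB ((⟪g, ·⟫) '' C) (σ g)) {w₀ : H} {δ : ℝ} (hδ : 0 < δ)
    (hball : closedBall (B w₀) δ ⊆ C) (ht : 0 < t) :
    ∃ w ∈ B ⁻¹' C, ∃ f : K,
      1 / 2 * ‖w‖ ^ 2 + (1 / 2 * ‖(B†) f‖ ^ 2 + σ (-f)) ≤ 2 * ‖w₀‖ ^ 3 / δ * t := by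
  have hw₀ : WithLp.toLp 2 (w₀, 0) ∈ penaltySet B C t := by
    simpa [penaltySet] using hball (mem_closedBall_self hδ.le)
  obtain ⟨p, hp, hmin⟩ := exists_mem_forall_inner_sub_nonneg ⟨_, hw₀⟩
    (isClosed_penaltySet B hCc t).isComplete (convex_penaltySet B hC t)
  have hpw₀ : ‖p‖ ≤ ‖w₀‖ := by simpa using norm_le_of_inner_sub_nonneg (hmin _ hw₀)
  obtain ⟨w, hw, hwle⟩ := exists_mem_preimage_half_sq_norm_le hC hδ hball hp
    ((WithLp.norm_fst_le H p).trans hpw₀)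
  refine ⟨w, hw, t⁻¹ • p.snd, ?_⟩
  have hdual := dual_le_of_forall_inner_sub_nonneg ht hσ hp hmin
  have hpenalty : ‖t • p.snd‖ ≤ t * ‖w₀‖ := by
    rw [norm_smul, Real.norm_of_nonneg ht.le]
    exact mul_le_mul_of_nonneg_left ((WithLp.norm_snd_le H p).trans hpw₀) ht.le
  have hgap : 2 * ‖w₀‖ ^ 2 * (‖t • p.snd‖ / δ) ≤ 2 * ‖w₀‖ ^ 3 / δ * t :=
    calc 2 * ‖w₀‖ ^ 2 * (‖t • p.snd‖ / δ) ≤ 2 * ‖w₀‖ ^ 2 * (t * ‖w₀‖ / δ) := by gcongr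
      _ = 2 * ‖w₀‖ ^ 3 / δ * t := by ring
  nlinarith [sq_nonneg ‖p.snd‖]

variable (B) in
theorem sInf_half_sq_norm_eq_neg_sInf_dual (hCc : IsClosed C) (hC : Convex ℝ C) {σ : K → ℝ}
    (hσ : ∀ g, IsLUB ((⟪g, ·⟫) '' C) (σ g)) {w₀ : H} {δ : ℝ} (hδ : 0 < δ)
    (hball : closedBall (B w₀) δ ⊆ C) :
    sInf ((fun w => 1 / 2 * ‖w‖ ^ 2) '' (B ⁻¹' C)) =
      -sInf (Set.range fun f => 1 / 2 * ‖(B†) f‖ ^ 2 + σ (-f)) := by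
  set P := sInf ((fun w => 1 / 2 * ‖w‖ ^ 2) '' (B ⁻¹' C))
  set D := sInf (Set.range fun f => 1 / 2 * ‖(B†) f‖ ^ 2 + σ (-f))
  have hPbdd : BddBelow ((fun w => 1 / 2 * ‖w‖ ^ 2) '' (B ⁻¹' C)) :=
    ⟨0, by rintro _ ⟨w, -, rfl⟩; positivity⟩
  have hweak : ∀ f, -P ≤ 1 / 2 * ‖(B†) f‖ ^ 2 + σ (-f) := fun f =>
    neg_le.mp <| le_csInf ⟨_, w₀, hball (mem_closedBall_self hδ.le), rfl⟩ <| by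
      rintro _ ⟨w, hw, rfl⟩
      exact neg_le.mp (neg_half_sq_norm_le_dual (fun g k hk => (hσ g).1 ⟨k, hk, rfl⟩) hw f)
  have hDbdd : BddBelow (Set.range fun f => 1 / 2 * ‖(B†) f‖ ^ 2 + σ (-f)) :=
    ⟨-P, Set.forall_mem_range.mpr hweak⟩
  have hgap : P + D ≤ 0 := nonpos_of_forall_pos_le_mul fun t ht => by
    obtain ⟨w, hw, f, hwf⟩ := exists_primal_dual_gap_le hCc hC hσ hδ hball ht
    linarith [csInf_le hPbdd ⟨w, hw, rfl⟩, csInf_le hDbdd ⟨f, rfl⟩]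
  have hdual : -P ≤ D := le_csInf (Set.range_nonempty _) (Set.forall_mem_range.mpr hweak)
  linarith

end Duality

section ProductOfBalls

variable {E₁ E₂ : Type*} [NormedAddCommGroup E₁] [InnerProductSpace ℝ E₁]
  [NormedAddCommGroup E₂] [InnerProductSpace ℝ E₂]

theorem isGreatest_inner_closedBall (g c : E₁) {ρ : ℝ} (hρ : 0 ≤ ρ) :
    IsGreatest ((⟪g, ·⟫) '' closedBall c ρ) (⟪g, c⟫ + ρ * ‖g‖) := by
  refine ⟨⟨c + (ρ / ‖g‖) • g, ?_, ?_⟩, ?_⟩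
  · rw [mem_closedBall_iff_norm, add_sub_cancel_left, norm_smul,
      Real.norm_of_nonneg (by positivity), div_mul_eq_mul_div]
    exact div_le_of_le_mul₀ (norm_nonneg g) hρ le_rfl
  · rcases eq_or_ne g 0 with rfl | hg
    · simp
    · dsimp only
      rw [inner_add_right, real_inner_smul_right, real_inner_self_eq_norm_sq]
      field_simp
  · rintro _ ⟨k, hk, rfl⟩
    rw [mem_closedBall_iff_norm] at hk
    have hcs := real_inner_le_norm g (k - c)
    rw [inner_sub_right] at hcs
    nlinarith [norm_nonneg g]

theorem IsGreatest.inner_prod {s₁ : Set E₁} {s₂ : Set E₂} {g : WithLp 2 (E₁ × E₂)} {a₁ a₂ : ℝ}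
    (h₁ : IsGreatest ((⟪g.fst, ·⟫) '' s₁) a₁) (h₂ : IsGreatest ((⟪g.snd, ·⟫) '' s₂) a₂) :
    IsGreatest ((⟪g, ·⟫) '' (WithLp.ofLp ⁻¹' (s₁ ×ˢ s₂))) (a₁ + a₂) := by
  obtain ⟨⟨k₁, hk₁, rfl⟩, hub₁⟩ := h₁
  obtain ⟨⟨k₂, hk₂, rfl⟩, hub₂⟩ := h₂
  refine ⟨⟨WithLp.toLp 2 (k₁, k₂), ⟨hk₁, hk₂⟩, rfl⟩, ?_⟩
  rintro _ ⟨k, ⟨hk₁, hk₂⟩, rfl⟩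
  exact add_le_add (hub₁ ⟨_, hk₁, rfl⟩) (hub₂ ⟨_, hk₂, rfl⟩)

end ProductOfBalls

theorem WithLp.closedBall_subset_ofLp_preimage_prod {p : ENNReal} [Fact (1 ≤ p)] {α β : Type*}
    [PseudoMetricSpace α] [PseudoMetricSpace β] (x : WithLp p (α × β)) (δ : ℝ) :
    closedBall x δ ⊆ WithLp.ofLp ⁻¹' (closedBall x.fst δ ×ˢ closedBall x.snd δ) :=
  fun k hk => ⟨(WithLp.dist_fst_le k x).trans hk, (WithLp.dist_snd_le k x).trans hk⟩

theorem adjoint_toLp_prod_apply {𝕜 H K₁ K₂ : Type*} [RCLike 𝕜]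
    [NormedAddCommGroup H] [InnerProductSpace 𝕜 H] [CompleteSpace H]
    [NormedAddCommGroup K₁] [InnerProductSpace 𝕜 K₁] [CompleteSpace K₁]
    [NormedAddCommGroup K₂] [InnerProductSpace 𝕜 K₂] [CompleteSpace K₂]
    (A₁ : H →L[𝕜] K₁) (A₂ : H →L[𝕜] K₂) (g : WithLp 2 (K₁ × K₂)) :
    ((((WithLp.prodContinuousLinearEquiv 2 𝕜 K₁ K₂).symm : K₁ × K₂ →L[𝕜] WithLp 2 (K₁ × K₂)) ∘L
      A₁.prod A₂)†) g = (A₁†) g.fst + (A₂†) g.snd :=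
  ext_inner_right 𝕜 fun w => by simp [ContinuousLinearMap.adjoint_inner_left, inner_add_left]

/-- Fenchel–Rockafellar duality for the leader's minimal-norm control problem:
with A = (A₁, A₂) : H → K₁ × K₂ of dense range and C the product of closed
balls, inf {½‖w‖² : A w ∈ C}
= −inf {½‖A*(f⁰,f¹)‖² − ⟨f⁰,c₁⟩ − ⟨f¹,c₂⟩ + ρ₁‖f⁰‖ + ρ₂‖f¹‖}. -/
theorem stmt_13 {H K₁ K₂ : Type*}
    [NormedAddCommGroup H] [InnerProductSpace ℝ H] [CompleteSpace H]
    [NormedAddCommGroup K₁] [InnerProductSpace ℝ K₁] [CompleteSpace K₁]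
    [NormedAddCommGroup K₂] [InnerProductSpace ℝ K₂] [CompleteSpace K₂]
    (A₁ : H →L[ℝ] K₁) (A₂ : H →L[ℝ] K₂)
    (hdense : DenseRange (fun w : H => (A₁ w, A₂ w)))
    (c₁ : K₁) (c₂ : K₂) (ρ₁ ρ₂ : ℝ) (hρ₁ : 0 < ρ₁) (hρ₂ : 0 < ρ₂) :
    sInf ((fun w : H => (1 / 2) * ‖w‖ ^ 2) ''
        {w : H | ‖A₁ w - c₁‖ ≤ ρ₁ ∧ ‖A₂ w - c₂‖ ≤ ρ₂})
      = -sInf (Set.range fun f : K₁ × K₂ =>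
          (1 / 2) * ‖ContinuousLinearMap.adjoint A₁ f.1
              + ContinuousLinearMap.adjoint A₂ f.2‖ ^ 2
            - ⟪f.1, c₁⟫ - ⟪f.2, c₂⟫ + ρ₁ * ‖f.1‖ + ρ₂ * ‖f.2‖) := by
  set B : H →L[ℝ] WithLp 2 (K₁ × K₂) :=
    ((WithLp.prodContinuousLinearEquiv 2 ℝ K₁ K₂).symm : K₁ × K₂ →L[ℝ] WithLp 2 (K₁ × K₂)) ∘L
      A₁.prod A₂
  set C : Set (WithLp 2 (K₁ × K₂)) := WithLp.ofLp ⁻¹' (closedBall c₁ ρ₁ ×ˢ closedBall c₂ ρ₂)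
  obtain ⟨w₀, hw₀⟩ := hdense.exists_dist_lt (c₁, c₂) (half_pos (lt_min hρ₁ hρ₂))
  obtain ⟨hw₀₁, hw₀₂⟩ : dist (A₁ w₀) c₁ < min ρ₁ ρ₂ / 2 ∧ dist (A₂ w₀) c₂ < min ρ₁ ρ₂ / 2 := by
    simpa [Prod.dist_eq, dist_comm] using hw₀
  have hball : closedBall (B w₀) (min ρ₁ ρ₂ / 2) ⊆ C :=
    (WithLp.closedBall_subset_ofLp_preimage_prod _ _).trans <| Set.preimage_mono <| Set.prod_mono
      (closedBall_subset_closedBall' <| show _ + dist (A₁ w₀) c₁ ≤ ρ₁ by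
        linarith [min_le_left ρ₁ ρ₂])
      (closedBall_subset_closedBall' <| show _ + dist (A₂ w₀) c₂ ≤ ρ₂ by
        linarith [min_le_right ρ₁ ρ₂])
  convert sInf_half_sq_norm_eq_neg_sInf_dual B
    ((isClosed_closedBall.prod isClosed_closedBall).preimage (WithLp.prod_continuous_ofLp 2 _ _))
    (((convex_closedBall c₁ ρ₁).prod (convex_closedBall c₂ ρ₂)).linear_preimage
      (WithLp.linearEquiv 2 ℝ (K₁ × K₂)).toLinearMap)
    (fun g => ((isGreatest_inner_closedBall g.fst c₁ hρ₁.le).inner_prod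
      (isGreatest_inner_closedBall g.snd c₂ hρ₂.le)).isLUB) (half_pos (lt_min hρ₁ hρ₂)) hball
    using 3
  · ext w
    simp only [Set.mem_preimage, Set.mem_prod, mem_closedBall_iff_norm]
    rfl
  · rw [← (WithLp.equiv 2 (K₁ × K₂)).symm.surjective.range_comp]
    congr 1
    funext f
    simp only [B, adjoint_toLp_prod_apply, WithLp.neg_fst, WithLp.neg_snd, inner_neg_left, norm_neg,
      WithLp.equiv_symm_apply, Function.comp_apply, WithLp.toLp_fst, WithLp.toLp_snd]
    ring
end

section
/- Let H, K₁, K₂ be real Hilbert spaces, A : H → K₁ × K₂ a continuous linear map with adjoint A*, c = (c₁, c₂) ∈ K₁ × K₂ and ρ₁, ρ₂ > 0. Suppose f* = (f⁰, f¹) ∈ K₁ × K₂ satisfies the variational inequality ⟨A(A* f*) − c, f̂ − f*⟩ + ρ₁(‖f̂⁰‖ − ‖f⁰‖) + ρ₂(‖f̂¹‖ − ‖f¹‖) ≥ 0 for all f̂ = (f̂⁰, f̂¹) ∈ K₁ × K₂. Then w₁ := A* f* satisfies A w₁ ∈ C := {(a,b) : ‖a − c₁‖ ≤ ρ₁ and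 ‖b − c₂‖ ≤ ρ₂}, and w₁ minimizes ½‖w‖²_H over {w ∈ H : A w ∈ C}. -/
open scoped RealInnerProductSpace

/-- Auxiliary: one-component consequence of the variational inequality. -/
lemma aux_vi {K : Type*} [NormedAddCommGroup K] [InnerProductSpace ℝ K]
    (p f0 : K) (ρ : ℝ) (hρ : 0 < ρ)
    (h : ∀ g : K, ⟪p, g - f0⟫ + ρ * (‖g‖ - ‖f0‖) ≥ 0) :
    ‖p‖ ≤ ρ ∧ ⟪p, f0⟫ = -(ρ * ‖f0‖) := by
  have h0 := h 0
  simp only [zero_sub, inner_neg_right, norm_zero] at h0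
  have h2 := h ((2 : ℝ) • f0)
  have h2a : (2 : ℝ) • f0 - f0 = f0 := by
    rw [two_smul]; abel
  rw [h2a, norm_smul] at h2
  simp at h2
  have heq : ⟪p, f0⟫ = -(ρ * ‖f0‖) := by linarith
  refine ⟨?_, heq⟩
  have hp := h (-p)
  rw [sub_eq_add_neg, inner_add_right, inner_neg_right, inner_neg_right,
    real_inner_self_eq_norm_sq, norm_neg, heq] at hp
  nlinarith [norm_nonneg p]

/-- Optimality system for the leader: if f* = (f⁰, f¹) satisfies the
variational inequality ⟨A(A* f*) − c, f̂ − f*⟩ + ρ₁(‖f̂⁰‖ − ‖f⁰‖)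
+ ρ₂(‖f̂¹‖ − ‖f¹‖) ≥ 0 for all f̂, then w₁ := A* f* is admissible
(A w₁ ∈ C) and minimizes ½‖w‖² over the admissible set. -/
theorem stmt_15 {H K₁ K₂ : Type*}
    [NormedAddCommGroup H] [InnerProductSpace ℝ H] [CompleteSpace H]
    [NormedAddCommGroup K₁] [InnerProductSpace ℝ K₁] [CompleteSpace K₁]
    [NormedAddCommGroup K₂] [InnerProductSpace ℝ K₂] [CompleteSpace K₂]
    (A₁ : H →L[ℝ] K₁) (A₂ : H →L[ℝ] K₂)
    (c₁ : K₁) (c₂ : K₂) (ρ₁ ρ₂ : ℝ) (hρ₁ : 0 < ρ₁) (hρ₂ : 0 < ρ₂)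
    (f0 : K₁) (f1 : K₂) (w₁ : H)
    (hw₁ : w₁ = ContinuousLinearMap.adjoint A₁ f0 + ContinuousLinearMap.adjoint A₂ f1)
    (hVI : ∀ fh : K₁ × K₂,
      ⟪A₁ w₁ - c₁, fh.1 - f0⟫ + ⟪A₂ w₁ - c₂, fh.2 - f1⟫
        + ρ₁ * (‖fh.1‖ - ‖f0‖) + ρ₂ * (‖fh.2‖ - ‖f1‖) ≥ 0) :
    (‖A₁ w₁ - c₁‖ ≤ ρ₁ ∧ ‖A₂ w₁ - c₂‖ ≤ ρ₂) ∧
    ∀ w : H, (‖A₁ w - c₁‖ ≤ ρ₁ ∧ ‖A₂ w - c₂‖ ≤ ρ₂) →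
      (1 / 2) * ‖w₁‖ ^ 2 ≤ (1 / 2) * ‖w‖ ^ 2 := by
  set p := A₁ w₁ - c₁ with hp
  set q := A₂ w₁ - c₂ with hq
  have hVI1 : ∀ g : K₁, ⟪p, g - f0⟫ + ρ₁ * (‖g‖ - ‖f0‖) ≥ 0 := by
    intro g
    have := hVI (g, f1)
    simp only [sub_self, inner_zero_right] at this
    linarith
  have hVI2 : ∀ g : K₂, ⟪q, g - f1⟫ + ρ₂ * (‖g‖ - ‖f1‖) ≥ 0 := by
    intro g
    have := hVI (f0, g)
    simp only [sub_self, inner_zero_right] at this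
    linarith
  obtain ⟨hpn, hpe⟩ := aux_vi p f0 ρ₁ hρ₁ hVI1
  obtain ⟨hqn, hqe⟩ := aux_vi q f1 ρ₂ hρ₂ hVI2
  refine ⟨⟨hpn, hqn⟩, ?_⟩
  intro w ⟨hw1, hw2⟩
  -- ⟪w₁, v⟫ = ⟪f0, A₁ v⟫ + ⟪f1, A₂ v⟫
  have hinner : ∀ v : H, ⟪w₁, v⟫ = ⟪f0, A₁ v⟫ + ⟪f1, A₂ v⟫ := by
    intro v
    rw [hw₁, inner_add_left, ContinuousLinearMap.adjoint_inner_left,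
      ContinuousLinearMap.adjoint_inner_left]
  have hsq : ‖w₁‖ ^ 2 = ⟪f0, c₁⟫ + ⟪f1, c₂⟫ - ρ₁ * ‖f0‖ - ρ₂ * ‖f1‖ := by
    have := hinner w₁
    rw [real_inner_self_eq_norm_sq] at this
    have e1 : ⟪f0, A₁ w₁⟫ = ⟪f0, p⟫ + ⟪f0, c₁⟫ := by
      rw [hp]; rw [inner_sub_right]; ring
    have e2 : ⟪f1, A₂ w₁⟫ = ⟪f1, q⟫ + ⟪f1, c₂⟫ := by
      rw [hq]; rw [inner_sub_right]; ring
    have e3 : ⟪f0, p⟫ = -(ρ₁ * ‖f0‖) := by rw [real_inner_comm]; exact hpe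
    have e4 : ⟪f1, q⟫ = -(ρ₂ * ‖f1‖) := by rw [real_inner_comm]; exact hqe
    rw [this, e1, e2, e3, e4]; ring
  have hlow : ‖w₁‖ ^ 2 ≤ ⟪w₁, w⟫ := by
    rw [hinner w, hsq]
    have e1 : ⟪f0, A₁ w⟫ = ⟪f0, A₁ w - c₁⟫ + ⟪f0, c₁⟫ := by
      rw [inner_sub_right]; ring
    have e2 : ⟪f1, A₂ w⟫ = ⟪f1, A₂ w - c₂⟫ + ⟪f1, c₂⟫ := by
      rw [inner_sub_right]; ring
    have b1 : -(‖f0‖ * ‖A₁ w - c₁‖) ≤ ⟪f0, A₁ w - c₁⟫ := by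
      have := abs_real_inner_le_norm f0 (A₁ w - c₁)
      cases abs_cases ⟪f0, A₁ w - c₁⟫ <;> linarith [this]
    have b2 : -(‖f1‖ * ‖A₂ w - c₂‖) ≤ ⟪f1, A₂ w - c₂⟫ := by
      have := abs_real_inner_le_norm f1 (A₂ w - c₂)
      cases abs_cases ⟪f1, A₂ w - c₂⟫ <;> linarith [this]
    have m1 : ‖f0‖ * ‖A₁ w - c₁‖ ≤ ‖f0‖ * ρ₁ :=
      mul_le_mul_of_nonneg_left hw1 (norm_nonneg f0)
    have m2 : ‖f1‖ * ‖A₂ w - c₂‖ ≤ ‖f1‖ * ρ₂ :=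
      mul_le_mul_of_nonneg_left hw2 (norm_nonneg f1)
    rw [e1, e2]
    linarith
  have hcs : ⟪w₁, w⟫ ≤ ‖w₁‖ * ‖w‖ := real_inner_le_norm w₁ w
  nlinarith [norm_nonneg w₁, norm_nonneg w]
end

section
/- Let H, K₁, K₂ be real Hilbert spaces and A : H → K₁ × K₂ a continuous linear map with dense range (equivalently, with injective adjoint A*). Let c₁ ∈ K₁, c₂ ∈ K₂ and ρ₁, ρ₂ > 0, and define the dual functional D(f⁰, f¹) := ½‖A*(f⁰, f¹)‖²_H − ⟨f⁰, c₁⟩ − ⟨f¹, c₂⟩ + ρ₁‖f⁰‖ + ρ₂‖f¹‖. Then D is strictly convex and coercive (D(f) → ∞ as ‖f‖ → ∞), and D attains its infimum over K₁ × K₂ at exactly one point. -/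
/-!
`A*(f⁰, f¹) = A₁* f⁰ + A₂* f¹` is injective because `A` has dense range, so `½‖A* f‖²` is
strictly convex; the other terms of `D` are convex. Choosing `w` with `A w` within
`min ρ₁ ρ₂ / 2` of `(c₁, c₂)` gives `D f ≥ (min ρ₁ ρ₂ / 2) ‖f‖ - ½‖w‖²`, hence coercivity.
Being convex and continuous, `D` is weakly lower semicontinuous, and balls of `K₁ × K₂` are
weakly compact (Riesz representation and Banach–Alaoglu in each factor), so `D` attains its
infimum; strict convexity makes the minimizer unique.
-/

open scoped RealInnerProductSpace
open Function Metric Set Filter ContinuousLinearMap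

theorem strictConvexOn_half_norm_sq {E : Type*} [NormedAddCommGroup E] [InnerProductSpace ℝ E] :
    StrictConvexOn ℝ univ fun x : E => 1 / 2 * ‖x‖ ^ 2 := by
  refine (strongConvexOn_iff_convex (m := 1).2 ?_).strictConvexOn one_pos
  simpa using convexOn_const (0 : ℝ) convex_univ

section Convexity

variable {𝕜 E F β : Type*} [Semiring 𝕜] [PartialOrder 𝕜] [AddCommMonoid E] [AddCommMonoid F]
  [AddCommMonoid β] [PartialOrder β] [Module 𝕜 E] [Module 𝕜 F] [SMul 𝕜 β]

theorem StrictConvexOn.comp_linearMap {f : F → β} {s : Set F} (hf : StrictConvexOn 𝕜 s f)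
    {g : E →ₗ[𝕜] F} (hg : Injective g) : StrictConvexOn 𝕜 (g ⁻¹' s) (f ∘ g) :=
  ⟨hf.1.linear_preimage _, fun x hx y hy hxy a b ha hb hab => by
    simpa only [comp_apply, map_add, map_smul] using hf.2 hx hy (hg.ne hxy) ha hb hab⟩

end Convexity

theorem InnerProductSpace.isCompact_toWeakSpace_closedBall {K : Type*} [NormedAddCommGroup K]
    [InnerProductSpace ℝ K] [CompleteSpace K] (R : ℝ) :
    IsCompact (toWeakSpace ℝ K '' closedBall 0 R) := by
  let riesz : WeakDual ℝ K → WeakSpace ℝ K := fun g =>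
    toWeakSpace ℝ K ((toDual ℝ K).symm (WeakDual.toStrongDual g))
  have hriesz : Continuous riesz := by
    refine WeakBilin.continuous_of_continuous_eval _ fun ℓ => ?_
    have h : ∀ g, (topDualPairing ℝ K).flip (riesz g) ℓ = g ((toDual ℝ K).symm ℓ) := fun g => by
      change ℓ ((toDual ℝ K).symm (WeakDual.toStrongDual g)) = WeakDual.toStrongDual g _
      rw [← InnerProductSpace.toDual_symm_apply, ← InnerProductSpace.toDual_symm_apply,
        real_inner_comm]
    simpa only [h] using WeakDual.eval_continuous _
  have himage : riesz '' (WeakDual.toStrongDual ⁻¹' closedBall 0 R) =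
      toWeakSpace ℝ K '' closedBall 0 R := by
    simp only [riesz, ← image_image]
    rw [WeakDual.toStrongDual.surjective.image_preimage, LinearIsometryEquiv.image_closedBall,
      map_zero]
  rw [← himage]
  exact (WeakDual.isCompact_closedBall _ R).image hriesz

theorem isCompact_toWeakSpace_closedBall_prod {K₁ K₂ : Type*} [NormedAddCommGroup K₁]
    [NormedSpace ℝ K₁] [NormedAddCommGroup K₂] [NormedSpace ℝ K₂]
    (h₁ : ∀ R, IsCompact (toWeakSpace ℝ K₁ '' closedBall 0 R))
    (h₂ : ∀ R, IsCompact (toWeakSpace ℝ K₂ '' closedBall 0 R)) (R : ℝ) :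
    IsCompact (toWeakSpace ℝ (K₁ × K₂) '' closedBall 0 R) := by
  let ι : WeakSpace ℝ K₁ × WeakSpace ℝ K₂ → WeakSpace ℝ (K₁ × K₂) := fun p =>
    WeakSpace.map (.inl ℝ K₁ K₂) p.1 + WeakSpace.map (.inr ℝ K₁ K₂) p.2
  have hι : Continuous ι := by fun_prop
  have himage :
      ι '' ((toWeakSpace ℝ K₁ '' closedBall 0 R) ×ˢ (toWeakSpace ℝ K₂ '' closedBall 0 R)) =
        toWeakSpace ℝ (K₁ × K₂) '' closedBall 0 R := by
    rw [← prodMap_image_prod, image_image, closedBall_prod_same, Prod.mk_zero_zero]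
    refine image_congr fun x _ => ?_
    change (x.1, (0 : K₂)) + ((0 : K₁), x.2) = x
    simp
  rw [← himage]
  exact ((h₁ R).prod (h₂ R)).image hι

theorem ConvexOn.lowerSemicontinuous_comp_toWeakSpace_symm {E : Type*} [NormedAddCommGroup E]
    [NormedSpace ℝ E] {φ : E → ℝ} (hconv : ConvexOn ℝ univ φ) (hφ : LowerSemicontinuous φ) :
    LowerSemicontinuous (φ ∘ (toWeakSpace ℝ E).symm) := by
  refine lowerSemicontinuous_iff_isClosed_preimage.2 fun t => ?_
  have hconv_le : Convex ℝ {x | φ x ≤ t} := by simpa using hconv.convex_le t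
  have hpre : φ ∘ (toWeakSpace ℝ E).symm ⁻¹' Iic t = toWeakSpace ℝ E '' {x | φ x ≤ t} := by
    ext; simp [LinearEquiv.image_eq_preimage_symm]
  have hclosed : IsClosed {x | φ x ≤ t} := hφ.isClosed_preimage t
  rw [hpre, ← hclosed.closure_eq, hconv_le.toWeakSpace_closure (𝕜 := ℝ)]
  exact isClosed_closure

theorem ConvexOn.exists_forall_le_of_tendsto {E : Type*} [NormedAddCommGroup E] [NormedSpace ℝ E]
    (hball : ∀ R, IsCompact (toWeakSpace ℝ E '' closedBall 0 R)) {φ : E → ℝ}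
    (hconv : ConvexOn ℝ univ φ) (hφ : LowerSemicontinuous φ)
    (hcoer : Tendsto φ (comap norm atTop) atTop) : ∃ x, ∀ y, φ x ≤ φ y := by
  obtain ⟨R, hR⟩ := eventually_atTop.1 (eventually_comap.1 (hcoer.eventually_ge_atTop (φ 0)))
  have hne : (toWeakSpace ℝ E '' closedBall 0 (max R 0)).Nonempty :=
    ⟨_, 0, mem_closedBall_self (le_max_right R 0), rfl⟩
  obtain ⟨_, ⟨x, -, rfl⟩, hmin⟩ :=
    ((hconv.lowerSemicontinuous_comp_toWeakSpace_symm hφ).lowerSemicontinuousOn _).exists_isMinOn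
      hne (hball (max R 0))
  have hball_le : ∀ y, ‖y‖ ≤ max R 0 → φ x ≤ φ y := fun y hy => by
    simpa using hmin ⟨y, mem_closedBall_zero_iff.2 hy, rfl⟩
  refine ⟨x, fun y => ?_⟩
  rcases le_or_gt ‖y‖ (max R 0) with hy | hy
  · exact hball_le y hy
  · exact (hball_le 0 (by simp)).trans (hR _ (le_max_left R 0 |>.trans hy.le) y rfl)

section DualFunctional

variable {H K₁ K₂ : Type*} [NormedAddCommGroup H] [InnerProductSpace ℝ H] [CompleteSpace H]
  [NormedAddCommGroup K₁] [InnerProductSpace ℝ K₁] [CompleteSpace K₁]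
  [NormedAddCommGroup K₂] [InnerProductSpace ℝ K₂] [CompleteSpace K₂]
  (A₁ : H →L[ℝ] K₁) (A₂ : H →L[ℝ] K₂) (c₁ : K₁) (c₂ : K₂) (ρ₁ ρ₂ : ℝ)

noncomputable def dualFunctional (f : K₁ × K₂) : ℝ :=
  1 / 2 * ‖(adjoint A₁).coprod (adjoint A₂) f‖ ^ 2 - ⟪f.1, c₁⟫ - ⟪f.2, c₂⟫
    + ρ₁ * ‖f.1‖ + ρ₂ * ‖f.2‖

theorem inner_coprod_adjoint_left (f : K₁ × K₂) (w : H) :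
    ⟪(adjoint A₁).coprod (adjoint A₂) f, w⟫ = ⟪f.1, A₁ w⟫ + ⟪f.2, A₂ w⟫ := by
  rw [coprod_apply, inner_add_left, adjoint_inner_left, adjoint_inner_left]

theorem injective_coprod_adjoint (hdense : DenseRange (A₁.prod A₂)) :
    Injective ((adjoint A₁).coprod (adjoint A₂)) := by
  refine (injective_iff_map_eq_zero _).2 fun f hf => ?_
  have hvanish : (fun y : K₁ × K₂ => ⟪f.1, y.1⟫ + ⟪f.2, y.2⟫) = 0 :=
    hdense.equalizer (by fun_prop) continuous_const <| funext fun w => by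
      change ⟪f.1, A₁ w⟫ + ⟪f.2, A₂ w⟫ = 0
      rw [← inner_coprod_adjoint_left, hf, inner_zero_left]
  have hself : ⟪f.1, f.1⟫ + ⟪f.2, f.2⟫ = 0 := congrFun hvanish f
  rw [add_eq_zero_iff_of_nonneg real_inner_self_nonneg real_inner_self_nonneg,
    inner_self_eq_zero, inner_self_eq_zero] at hself
  exact Prod.ext hself.1 hself.2

theorem continuous_dualFunctional : Continuous (dualFunctional A₁ A₂ c₁ c₂ ρ₁ ρ₂) := by
  unfold dualFunctional; fun_prop

variable {A₁ A₂ ρ₁ ρ₂} in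
theorem strictConvexOn_dualFunctional (hinj : Injective ((adjoint A₁).coprod (adjoint A₂)))
    (hρ₁ : 0 ≤ ρ₁) (hρ₂ : 0 ≤ ρ₂) :
    StrictConvexOn ℝ univ (dualFunctional A₁ A₂ c₁ c₂ ρ₁ ρ₂) := by
  have hquad : StrictConvexOn ℝ univ fun f => 1 / 2 * ‖(adjoint A₁).coprod (adjoint A₂) f‖ ^ 2 :=
    strictConvexOn_half_norm_sq.comp_linearMap
      (g := ((adjoint A₁).coprod (adjoint A₂) : K₁ × K₂ →ₗ[ℝ] H)) hinj
  have hlin : ConcaveOn ℝ univ fun f : K₁ × K₂ => ⟪f.1, c₁⟫ + ⟪f.2, c₂⟫ :=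
    (((innerSL ℝ c₁).comp (fst ℝ K₁ K₂) + (innerSL ℝ c₂).comp (snd ℝ K₁ K₂)).toLinearMap
      |>.concaveOn convex_univ).congr fun f _ => by simp [real_inner_comm]
  have hnorm₁ : ConvexOn ℝ univ fun f : K₁ × K₂ => ρ₁ * ‖f.1‖ :=
    ((convexOn_norm convex_univ).comp_linearMap (LinearMap.fst ℝ K₁ K₂)).smul hρ₁
  have hnorm₂ : ConvexOn ℝ univ fun f : K₁ × K₂ => ρ₂ * ‖f.2‖ :=
    ((convexOn_norm convex_univ).comp_linearMap (LinearMap.snd ℝ K₁ K₂)).smul hρ₂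
  refine (((hquad.sub_concaveOn hlin).add_convexOn hnorm₁).add_convexOn hnorm₂).congr
    fun f _ => ?_
  simp only [dualFunctional, Pi.add_apply, Pi.sub_apply]
  ring

theorem le_dualFunctional (w : H) (f : K₁ × K₂) :
    (ρ₁ - ‖c₁ - A₁ w‖) * ‖f.1‖ + (ρ₂ - ‖c₂ - A₂ w‖) * ‖f.2‖ - 1 / 2 * ‖w‖ ^ 2 ≤
      dualFunctional A₁ A₂ c₁ c₂ ρ₁ ρ₂ f := by
  have hsplit₁ : ⟪f.1, c₁⟫ = ⟪f.1, A₁ w⟫ + ⟪f.1, c₁ - A₁ w⟫ := by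
    rw [← inner_add_right, add_sub_cancel]
  have hsplit₂ : ⟪f.2, c₂⟫ = ⟪f.2, A₂ w⟫ + ⟪f.2, c₂ - A₂ w⟫ := by
    rw [← inner_add_right, add_sub_cancel]
  have hadj : ⟪f.1, A₁ w⟫ + ⟪f.2, A₂ w⟫ ≤ ‖(adjoint A₁).coprod (adjoint A₂) f‖ * ‖w‖ :=
    inner_coprod_adjoint_left A₁ A₂ f w ▸ real_inner_le_norm _ _
  have h₁ : ⟪f.1, c₁ - A₁ w⟫ ≤ ‖f.1‖ * ‖c₁ - A₁ w‖ := real_inner_le_norm _ _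
  have h₂ : ⟪f.2, c₂ - A₂ w⟫ ≤ ‖f.2‖ * ‖c₂ - A₂ w‖ := real_inner_le_norm _ _
  unfold dualFunctional
  nlinarith [sq_nonneg (‖(adjoint A₁).coprod (adjoint A₂) f‖ - ‖w‖)]

variable {A₁ A₂ ρ₁ ρ₂} in
theorem tendsto_dualFunctional (hdense : DenseRange (A₁.prod A₂)) (hρ₁ : 0 < ρ₁)
    (hρ₂ : 0 < ρ₂) : Tendsto (dualFunctional A₁ A₂ c₁ c₂ ρ₁ ρ₂) (comap norm atTop) atTop := by
  set ρ := min ρ₁ ρ₂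
  have hρ : 0 < ρ := lt_min hρ₁ hρ₂
  obtain ⟨w, hw⟩ := hdense.exists_dist_lt (c₁, c₂) (half_pos hρ)
  obtain ⟨hw₁, hw₂⟩ : ‖c₁ - A₁ w‖ < ρ / 2 ∧ ‖c₂ - A₂ w‖ < ρ / 2 := by
    simpa [Prod.dist_eq, dist_eq_norm] using hw
  have hbound : ∀ f, ρ / 2 * ‖f‖ + -(1 / 2 * ‖w‖ ^ 2) ≤ dualFunctional A₁ A₂ c₁ c₂ ρ₁ ρ₂ f :=
    fun f => by
      have hcoef₁ : ρ / 2 ≤ ρ₁ - ‖c₁ - A₁ w‖ := by linarith [min_le_left ρ₁ ρ₂]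
      have hcoef₂ : ρ / 2 ≤ ρ₂ - ‖c₂ - A₂ w‖ := by linarith [min_le_right ρ₁ ρ₂]
      have hnorm : ‖f‖ ≤ ‖f.1‖ + ‖f.2‖ :=
        Prod.norm_def f ▸ max_le_add_of_nonneg (norm_nonneg _) (norm_nonneg _)
      nlinarith [le_dualFunctional A₁ A₂ c₁ c₂ ρ₁ ρ₂ w f, norm_nonneg f.1, norm_nonneg f.2]
  exact tendsto_atTop_mono hbound <|
    tendsto_atTop_add_const_right _ _ (tendsto_comap.const_mul_atTop (half_pos hρ))

end DualFunctional

/-- The dual functional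
D(f⁰,f¹) = ½‖A*(f⁰,f¹)‖² − ⟨f⁰,c₁⟩ − ⟨f¹,c₂⟩ + ρ₁‖f⁰‖ + ρ₂‖f¹‖
of the leader's minimal-norm problem (A of dense range, ρ₁, ρ₂ > 0) is
strictly convex and coercive, and attains its infimum at exactly one point. -/
theorem stmt_16 {H K₁ K₂ : Type*}
    [NormedAddCommGroup H] [InnerProductSpace ℝ H] [CompleteSpace H]
    [NormedAddCommGroup K₁] [InnerProductSpace ℝ K₁] [CompleteSpace K₁]
    [NormedAddCommGroup K₂] [InnerProductSpace ℝ K₂] [CompleteSpace K₂]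
    (A₁ : H →L[ℝ] K₁) (A₂ : H →L[ℝ] K₂)
    (hdense : DenseRange (fun w : H => (A₁ w, A₂ w)))
    (c₁ : K₁) (c₂ : K₂) (ρ₁ ρ₂ : ℝ) (hρ₁ : 0 < ρ₁) (hρ₂ : 0 < ρ₂)
    (D : K₁ × K₂ → ℝ)
    (hD : ∀ f : K₁ × K₂, D f
      = (1 / 2) * ‖ContinuousLinearMap.adjoint A₁ f.1
            + ContinuousLinearMap.adjoint A₂ f.2‖ ^ 2
        - ⟪f.1, c₁⟫ - ⟪f.2, c₂⟫ + ρ₁ * ‖f.1‖ + ρ₂ * ‖f.2‖) :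
    StrictConvexOn ℝ Set.univ D ∧
    Filter.Tendsto D (Filter.comap (fun f : K₁ × K₂ => ‖f‖) Filter.atTop)
      Filter.atTop ∧
    ∃! fstar : K₁ × K₂, ∀ f : K₁ × K₂, D fstar ≤ D f := by
  obtain rfl : D = dualFunctional A₁ A₂ c₁ c₂ ρ₁ ρ₂ :=
    funext fun f => by rw [hD, dualFunctional, coprod_apply]
  have hstrict := strictConvexOn_dualFunctional c₁ c₂
    (injective_coprod_adjoint A₁ A₂ hdense) hρ₁.le hρ₂.le
  have hcoer := tendsto_dualFunctional c₁ c₂ hdense hρ₁ hρ₂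
  have hball := isCompact_toWeakSpace_closedBall_prod
    (InnerProductSpace.isCompact_toWeakSpace_closedBall (K := K₁))
    (InnerProductSpace.isCompact_toWeakSpace_closedBall (K := K₂))
  obtain ⟨fstar, hmin⟩ := hstrict.convexOn.exists_forall_le_of_tendsto hball
    (continuous_dualFunctional A₁ A₂ c₁ c₂ ρ₁ ρ₂).lowerSemicontinuous hcoer
  exact ⟨hstrict, hcoer, fstar, hmin, fun f hf =>
    hstrict.eq_of_isMinOn (fun g _ => hf g) (fun g _ => hmin g) trivial trivial⟩
end
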